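/- For θ > 0, μ ∈ ℝ, and Z ~ N(0,1): E[(η_θ(μ + Z) − μ)²] is a nondecreasing function of |μ|, and for every μ, E[(η_θ(μ+Z) − μ)²] ≤ 1 + θ², with equality in the limit |μ| → ∞. -/

import Mathlib

/-!
Since `η_θ(μ + z) - μ = z - clip_θ(μ + z)`, with `clip_θ` the projection onto `[-θ, θ]`, the risk is
`r(μ) = E[(Z - clip_θ(μ + Z))²]`. Off the null set `|μ + Z| = θ` the integrand has `μ`-derivative
`2μ·1{|μ + Z| < θ}`, and it is Lipschitz in `μ` with an integrable constant, so
`r'(μ) = 2μ·P(|μ + Z| < θ) ≥ 0` for `μ ≥ 0`. The symmetry of `Z` makes `r` even. As `μ → ∞`,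
`clip_θ(μ + Z) → θ`, so by dominated convergence `r(μ) → E[(Z - θ)²] = 1 + θ²`, which by
monotonicity is also an upper bound.
-/

open MeasureTheory Filter

noncomputable def stdφ (t : ℝ) : ℝ := Real.exp (-t^2/2) / Real.sqrt (2*Real.pi)

open ProbabilityTheory Set Topology

namespace SoftThreshold

section Gaussian

variable {m : ℝ} {v : NNReal}

lemma stdφ_eq_gaussianPDFReal : stdφ = gaussianPDFReal 0 1 := by
  ext t
  simp [stdφ, gaussianPDFReal, div_eq_inv_mul]

lemma integral_mul_stdφ (f : ℝ → ℝ) : ∫ z, f z * stdφ z = ∫ z, f z ∂gaussianReal 0 1 := by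
  simp [integral_gaussianReal_eq_integral_smul, stdφ_eq_gaussianPDFReal, mul_comm]

lemma integral_comp_neg_gaussianReal (f : ℝ → ℝ) :
    ∫ z, f (-z) ∂gaussianReal 0 v = ∫ z, f z ∂gaussianReal 0 v :=
  MeasurePreserving.integral_comp' (f := MeasurableEquiv.neg ℝ)
    ⟨measurable_neg, by simpa using gaussianReal_map_neg (μ := 0) (v := v)⟩ f

lemma integrable_abs_add_const_sq (c : ℝ) :
    Integrable (fun z => (|z| + c) ^ 2) (gaussianReal m v) :=
  ((memLp_id_gaussianReal 2).norm.add (memLp_const c)).integrable_sq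

lemma integral_sub_const_sq_gaussianReal (a : ℝ) :
    ∫ z, (z - a) ^ 2 ∂gaussianReal m v = v + (m - a) ^ 2 := by
  have hmean : ∫ z, (z - a) ∂gaussianReal m v = m - a := by
    have hid : Integrable (fun z => z) (gaussianReal m v) :=
      (memLp_id_gaussianReal 1).integrable le_rfl
    simp [integral_sub hid (integrable_const a), integral_id_gaussianReal]
  have hX : MemLp (fun z => z - a) 2 (gaussianReal m v) :=
    (memLp_id_gaussianReal 2).sub (memLp_const a)
  have hvar := variance_eq_sub hX
  rw [variance_sub_const (X := fun z => z) aestronglyMeasurable_id,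
    variance_fun_id_gaussianReal, hmean] at hvar
  simp only [Pi.pow_apply] at hvar
  linarith

end Gaussian

noncomputable def clip (θ t : ℝ) : ℝ := max (min t θ) (-θ)

section Clip

variable {θ t : ℝ}

lemma clip_of_abs_le (h : |t| ≤ θ) : clip θ t = t := by
  rw [abs_le] at h
  rw [clip, min_eq_left h.2, max_eq_left h.1]

lemma clip_of_le_neg (h : t ≤ -θ) : clip θ t = -θ :=
  max_eq_right (min_le_of_left_le h)

lemma clip_of_ge (hθ : 0 ≤ θ) (h : θ ≤ t) : clip θ t = θ := by
  rw [clip, min_eq_right h, max_eq_left (by linarith)]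

lemma abs_clip_le (hθ : 0 ≤ θ) (t : ℝ) : |clip θ t| ≤ θ :=
  abs_le.2 ⟨le_max_right _ _, max_le (min_le_right _ _) (by linarith)⟩

lemma abs_clip_sub_clip_le (a b : ℝ) : |clip θ a - clip θ b| ≤ |a - b| :=
  (abs_max_sub_max_le_abs _ _ _).trans <| by
    simpa using abs_min_sub_min_le_max a θ b θ

@[fun_prop]
lemma continuous_clip : Continuous (clip θ) := by
  unfold clip
  fun_prop

lemma clip_neg (hθ : 0 ≤ θ) (t : ℝ) : clip θ (-t) = -clip θ t := by
  rcases le_total θ t with h | h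
  · rw [clip_of_ge hθ h, clip_of_le_neg (neg_le_neg h)]
  rcases le_total t (-θ) with h' | h'
  · rw [clip_of_le_neg h', clip_of_ge hθ (le_neg_of_le_neg h'), neg_neg]
  · have ht : |t| ≤ θ := abs_le.2 ⟨h', h⟩
    rw [clip_of_abs_le ht, clip_of_abs_le (by rwa [abs_neg])]

lemma sign_mul_max_abs_sub_eq_sub_clip (hθ : 0 ≤ θ) (x : ℝ) :
    Real.sign x * max (|x| - θ) 0 = x - clip θ x := by
  rcases le_or_gt |x| θ with h | h
  · rw [clip_of_abs_le h, max_eq_right (sub_nonpos.2 h), mul_zero, sub_self]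
  rcases lt_abs.1 h with h | h
  · rw [Real.sign_of_pos (by linarith), abs_of_pos (by linarith), clip_of_ge hθ h.le,
      max_eq_left (by linarith), one_mul]
  · rw [Real.sign_of_neg (by linarith), abs_of_neg (by linarith),
      clip_of_le_neg (le_neg_of_le_neg h.le), max_eq_left (by linarith)]
    ring

lemma hasDerivAt_clip (hθ : 0 ≤ θ) (h : |t| ≠ θ) :
    HasDerivAt (clip θ) (if |t| < θ then 1 else 0) t := by
  rcases h.lt_or_gt with hlt | hgt
  · rw [if_pos hlt]
    refine (hasDerivAt_id t).congr_of_eventuallyEq ?_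
    filter_upwards [continuous_abs.continuousAt.eventually_lt continuousAt_const hlt]
      with s hs using clip_of_abs_le hs.le
  rw [if_neg hgt.not_gt]
  rcases lt_abs.1 hgt with h | h
  · refine (hasDerivAt_const t θ).congr_of_eventuallyEq ?_
    filter_upwards [eventually_gt_nhds h] with s hs using clip_of_ge hθ hs.le
  · refine (hasDerivAt_const t (-θ)).congr_of_eventuallyEq ?_
    filter_upwards [eventually_lt_nhds (lt_neg_of_lt_neg h)] with s hs
      using clip_of_le_neg hs.le

end Clip

noncomputable def risk (θ μ : ℝ) : ℝ := ∫ z, (z - clip θ (μ + z)) ^ 2 ∂gaussianReal 0 1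

section Risk

variable {θ : ℝ}

lemma integral_soft_threshold_eq_risk (hθ : 0 ≤ θ) (μ : ℝ) :
    ∫ z : ℝ, (Real.sign (μ + z) * max (|μ + z| - θ) 0 - μ)^2 * stdφ z = risk θ μ := by
  simp only [integral_mul_stdφ, sign_mul_max_abs_sub_eq_sub_clip hθ, risk,
    sub_right_comm _ (clip θ _), add_sub_cancel_left]

lemma sub_clip_sq_le (hθ : 0 ≤ θ) (μ z : ℝ) : (z - clip θ (μ + z)) ^ 2 ≤ (|z| + θ) ^ 2 := by
  rw [← sq_abs]
  refine pow_le_pow_left₀ (abs_nonneg _) ((abs_sub _ _).trans ?_) 2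
  linarith [abs_clip_le hθ (μ + z)]

lemma integrable_sub_clip_sq (hθ : 0 ≤ θ) (μ : ℝ) :
    Integrable (fun z => (z - clip θ (μ + z)) ^ 2) (gaussianReal 0 1) :=
  (integrable_abs_add_const_sq θ).mono' (by fun_prop)
    (ae_of_all _ fun z => (Real.norm_of_nonneg (sq_nonneg _)).trans_le (sub_clip_sq_le hθ μ z))

lemma hasDerivAt_sub_clip_sq (hθ : 0 ≤ θ) {μ z : ℝ} (h : |μ + z| ≠ θ) :
    HasDerivAt (fun μ => (z - clip θ (μ + z)) ^ 2) (if |μ + z| < θ then 2 * μ else 0) μ := by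
  have hclip := (hasDerivAt_clip hθ h).comp μ ((hasDerivAt_id μ).add_const z)
  refine (((hasDerivAt_const μ z).sub hclip).pow 2).congr_deriv ?_
  split_ifs with hlt
  · simp [clip_of_abs_le hlt.le]
  · simp

lemma lipschitzWith_sub_clip_sq (hθ : 0 ≤ θ) (z : ℝ) :
    LipschitzWith (Real.nnabs (2 * (|z| + θ))) (fun μ => (z - clip θ (μ + z)) ^ 2) := by
  refine LipschitzWith.of_dist_le_mul fun μ₁ μ₂ => ?_
  have hdiff : |clip θ (μ₂ + z) - clip θ (μ₁ + z)| ≤ |μ₁ - μ₂| := by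
    simpa [abs_sub_comm μ₂ μ₁] using abs_clip_sub_clip_le (θ := θ) (μ₂ + z) (μ₁ + z)
  have hsum : |2 * z - clip θ (μ₁ + z) - clip θ (μ₂ + z)| ≤ 2 * (|z| + θ) := by
    have h₁ := abs_le.1 (abs_clip_le hθ (μ₁ + z))
    have h₂ := abs_le.1 (abs_clip_le hθ (μ₂ + z))
    rw [abs_le]
    constructor <;> linarith [le_abs_self z, neg_abs_le z]
  rw [Real.dist_eq, Real.dist_eq, Real.coe_nnabs,
    abs_of_nonneg (a := 2 * (|z| + θ)) (by linarith [abs_nonneg z])]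
  calc |(z - clip θ (μ₁ + z)) ^ 2 - (z - clip θ (μ₂ + z)) ^ 2|
      = |clip θ (μ₂ + z) - clip θ (μ₁ + z)| * |2 * z - clip θ (μ₁ + z) - clip θ (μ₂ + z)| := by
        rw [← abs_mul]
        ring_nf
    _ ≤ |μ₁ - μ₂| * (2 * (|z| + θ)) := mul_le_mul hdiff hsum (abs_nonneg _) (abs_nonneg _)
    _ = 2 * (|z| + θ) * |μ₁ - μ₂| := mul_comm _ _

lemma hasDerivAt_risk (hθ : 0 ≤ θ) (μ : ℝ) :
    HasDerivAt (risk θ) (2 * μ * (gaussianReal 0 1).real {z | |μ + z| < θ}) μ := by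
  have hs : MeasurableSet {z : ℝ | |μ + z| < θ} := measurableSet_lt (by fun_prop) measurable_const
  have h_ae : ∀ᵐ z ∂gaussianReal 0 1, |μ + z| ≠ θ := by
    have := nullSingletonClass_gaussianReal (μ := 0) one_ne_zero
    refine ((Set.toFinite {θ - μ, -θ - μ}).countable.ae_notMem _).mono fun z hz heq => hz ?_
    rcases (abs_eq hθ).1 heq with h | h
    · exact Or.inl (by linarith)
    · exact Or.inr (by simp only [Set.mem_singleton_iff]; linarith)
  have h_bound : Integrable (fun z => 2 * (|z| + θ)) (gaussianReal 0 1) :=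
    ((((memLp_id_gaussianReal 1).integrable le_rfl).abs.add (integrable_const θ)).const_mul 2)
  have key := hasDerivAt_integral_of_dominated_loc_of_lip (μ := gaussianReal 0 1)
    (F := fun μ z => (z - clip θ (μ + z)) ^ 2) (F' := {z | |μ + z| < θ}.indicator fun _ => 2 * μ)
    univ_mem
    (Eventually.of_forall fun μ => (integrable_sub_clip_sq hθ μ).aestronglyMeasurable)
    (integrable_sub_clip_sq hθ μ) (stronglyMeasurable_const.indicator hs).aestronglyMeasurable
    (ae_of_all _ fun z => (lipschitzWith_sub_clip_sq hθ z).lipschitzOnWith) h_bound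
    (h_ae.mono fun z hz => by simpa [Set.indicator_apply] using hasDerivAt_sub_clip_sq hθ hz)
  rw [integral_indicator_const _ hs, smul_eq_mul, mul_comm _ (2 * μ)] at key
  exact key.2

lemma risk_neg (hθ : 0 ≤ θ) (μ : ℝ) : risk θ (-μ) = risk θ μ := by
  rw [risk, ← integral_comp_neg_gaussianReal]
  congr 1 with z
  rw [← neg_add, clip_neg hθ]
  ring

lemma risk_abs (hθ : 0 ≤ θ) (μ : ℝ) : risk θ |μ| = risk θ μ := by
  rcases abs_choice μ with h | h <;> rw [h]
  exact risk_neg hθ μ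

lemma monotoneOn_risk (hθ : 0 ≤ θ) : MonotoneOn (risk θ) (Ici 0) := by
  have hdiff : Differentiable ℝ (risk θ) := fun μ => (hasDerivAt_risk hθ μ).differentiableAt
  refine monotoneOn_of_deriv_nonneg (convex_Ici 0) hdiff.continuous.continuousOn
    hdiff.differentiableOn fun μ hμ => ?_
  rw [interior_Ici, mem_Ioi] at hμ
  rw [(hasDerivAt_risk hθ μ).deriv]
  exact mul_nonneg (by linarith) measureReal_nonneg

lemma risk_le_risk_of_abs_le (hθ : 0 ≤ θ) {μ₁ μ₂ : ℝ} (h : |μ₁| ≤ |μ₂|) :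
    risk θ μ₁ ≤ risk θ μ₂ := by
  rw [← risk_abs hθ μ₁, ← risk_abs hθ μ₂]
  exact monotoneOn_risk hθ (abs_nonneg μ₁) ((abs_nonneg μ₁).trans h) h

lemma tendsto_risk_atTop (hθ : 0 ≤ θ) : Tendsto (risk θ) atTop (𝓝 (1 + θ ^ 2)) := by
  have hlim : ∫ z, (z - θ) ^ 2 ∂gaussianReal 0 1 = 1 + θ ^ 2 := by
    simp [integral_sub_const_sq_gaussianReal]
  rw [← hlim]
  refine tendsto_integral_filter_of_dominated_convergence _
    (Eventually.of_forall fun μ => (integrable_sub_clip_sq hθ μ).aestronglyMeasurable)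
    (Eventually.of_forall fun μ => ae_of_all _ fun z =>
      (Real.norm_of_nonneg (sq_nonneg _)).trans_le (sub_clip_sq_le hθ μ z))
    (integrable_abs_add_const_sq θ) (ae_of_all _ fun z => tendsto_const_nhds.congr' ?_)
  filter_upwards [eventually_ge_atTop (θ - z)] with μ hμ
  rw [clip_of_ge hθ (by linarith)]

lemma tendsto_risk_atBot (hθ : 0 ≤ θ) : Tendsto (risk θ) atBot (𝓝 (1 + θ ^ 2)) :=
  ((tendsto_risk_atTop hθ).comp tendsto_neg_atBot_atTop).congr fun μ => risk_neg hθ μ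

lemma risk_le (hθ : 0 ≤ θ) (μ : ℝ) : risk θ μ ≤ 1 + θ ^ 2 :=
  ge_of_tendsto (tendsto_risk_atTop hθ) <| (eventually_ge_atTop |μ|).mono fun _ h =>
    risk_le_risk_of_abs_le hθ (h.trans_eq (abs_of_nonneg ((abs_nonneg μ).trans h)).symm)

end Risk

end SoftThreshold

open SoftThreshold

/-- The Gaussian risk of soft thresholding `F μ = E[(η_θ(μ+Z) - μ)²]` is nondecreasing in `|μ|`,
is bounded by `1 + θ²`, and attains that bound in the limit `|μ| → ∞`. -/
theorem soft_threshold_risk_monotone_and_bounded (θ : ℝ) (hθ : 0 < θ)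
    (F : ℝ → ℝ)
    (hF : ∀ μ, F μ = ∫ z : ℝ, (Real.sign (μ + z) * max (|μ + z| - θ) 0 - μ)^2 * stdφ z) :
    (∀ μ₁ μ₂ : ℝ, |μ₁| ≤ |μ₂| → F μ₁ ≤ F μ₂) ∧
    (∀ μ : ℝ, F μ ≤ 1 + θ^2) ∧
    Tendsto F atTop (nhds (1 + θ^2)) ∧
    Tendsto F atBot (nhds (1 + θ^2)) := by
  obtain rfl : F = risk θ :=
    funext fun μ => (hF μ).trans (integral_soft_threshold_eq_risk hθ.le μ)
  exact ⟨fun _ _ => risk_le_risk_of_abs_le hθ.le, risk_le hθ.le, tendsto_risk_atTop hθ.le,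
    tendsto_risk_atBot hθ.le⟩
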